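/- arXiv:0911.0367 — 7 statements merged into one kernel-verified Lean document; each statement's English description precedes it below -/
import Mathlib

section
/- Let (G, p) be a framework in ℝ³, let λ : E → ℝ be a projective self-stress of (G, p), and let S ⊆ V be any set of vertices. Then the sum over all edges {i, j} ∈ E with i ∈ S and j ∉ S of λ {i,j} • (p̂ i ∧ p̂ j) equals 0 in Λ²(ℝ⁴). (Cut-set theorem: the edges joining S to its complement form a cut set of the framework, and for any self-stress the stressed bar extensors across the cut set sum to zero.) -/
open Matrix

/-- The wedge product `x ∧ y` of two vectors of `ℝ⁴`, viewed inside the exterior algebra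
(its value lies in the second exterior power `Λ²(ℝ⁴)`). -/
noncomputable def wedge (x y : Fin 4 → ℝ) : ExteriorAlgebra ℝ (Fin 4 → ℝ) :=
  ExteriorAlgebra.ι ℝ x * ExteriorAlgebra.ι ℝ y

/-- `p̂ = (p, 1) ∈ ℝ⁴` for `p ∈ ℝ³`. -/
noncomputable def phat (x : Fin 3 → ℝ) : Fin 4 → ℝ := Fin.snoc x 1

lemma wedge_antisymm (x y : Fin 4 → ℝ) : wedge x y = - wedge y x := by
  have h := ExteriorAlgebra.ι_add_mul_swap (R := ℝ) x y
  unfold wedge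
  exact eq_neg_of_add_eq_zero_left h

/-- Cut-set theorem: for a projective self-stress `lam` of a framework `(G, p)` and any set
`S` of vertices, the stressed bar extensors across the cut from `S` to its complement
sum to zero in `Λ²(ℝ⁴)`. -/
theorem cut_set_theorem {V : Type*} [Fintype V] [DecidableEq V]
    (G : SimpleGraph V) [DecidableRel G.Adj] (p : V → Fin 3 → ℝ)
    (hframe : ∀ i j : V, G.Adj i j → p i ≠ p j)
    (lam : Sym2 V → ℝ)
    (hstress : ∀ i : V,
      ∑ j ∈ G.neighborFinset i, lam s(i, j) • wedge (phat (p i)) (phat (p j)) = 0)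
    (S : Set V) [DecidablePred (· ∈ S)] :
    ∑ i ∈ Finset.univ.filter (· ∈ S),
      ∑ j ∈ (G.neighborFinset i).filter (· ∉ S),
        lam s(i, j) • wedge (phat (p i)) (phat (p j)) = 0 := by
  classical
  set A := Finset.univ.filter (· ∈ S) with hA
  set f : V → V → ExteriorAlgebra ℝ (Fin 4 → ℝ) :=
    fun i j => lam s(i, j) • wedge (phat (p i)) (phat (p j)) with hf
  set g : V → V → ExteriorAlgebra ℝ (Fin 4 → ℝ) :=
    fun i j => if G.Adj i j then f i j else 0 with hg
  have hganti : ∀ i j, g i j = - g j i := by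
    intro i j
    by_cases h : G.Adj i j
    · simp only [hg, h, h.symm, if_true, hf]
      rw [Sym2.eq_swap, wedge_antisymm (phat (p i)), smul_neg]
    · have h' : ¬ G.Adj j i := fun hh => h hh.symm
      simp [hg, h, h']
  have hTin : ∑ i ∈ A, ∑ j ∈ (G.neighborFinset i).filter (· ∈ S), f i j = 0 := by
    have hrw : ∀ i, ∑ j ∈ (G.neighborFinset i).filter (· ∈ S), f i j
        = ∑ j ∈ A, g i j := by
      intro i
      rw [show (G.neighborFinset i).filter (· ∈ S) = A.filter (G.Adj i) by
        ext j; simp [hA, and_comm]]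
      exact Finset.sum_filter _ _
    simp only [hrw]
    set T := ∑ i ∈ A, ∑ j ∈ A, g i j with hT
    have h1 : T = -T := by
      calc T = ∑ j ∈ A, ∑ i ∈ A, g i j := Finset.sum_comm
        _ = ∑ j ∈ A, ∑ i ∈ A, -(g j i) := by
            exact Finset.sum_congr rfl fun j _ =>
              Finset.sum_congr rfl fun i _ => hganti i j
        _ = -T := by simp [hT, Finset.sum_neg_distrib]
    have h2 : (2 : ℝ) • T = 0 := by
      rw [two_smul]
      nth_rewrite 1 [h1]
      simp
    rcases smul_eq_zero.mp h2 with h | h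
    · norm_num at h
    · exact h
  have hsplit : ∀ i, ∑ j ∈ G.neighborFinset i, f i j
      = (∑ j ∈ (G.neighborFinset i).filter (· ∈ S), f i j)
        + ∑ j ∈ (G.neighborFinset i).filter (· ∉ S), f i j := by
    intro i
    exact (Finset.sum_filter_add_sum_filter_not _ _ _).symm
  have htot : ∑ i ∈ A, ∑ j ∈ G.neighborFinset i, f i j = 0 := by
    exact Finset.sum_eq_zero fun i _ => hstress i
  calc ∑ i ∈ A, ∑ j ∈ (G.neighborFinset i).filter (· ∉ S), f i j
      = (∑ i ∈ A, ∑ j ∈ G.neighborFinset i, f i j)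
        - ∑ i ∈ A, ∑ j ∈ (G.neighborFinset i).filter (· ∈ S), f i j := by
        rw [← Finset.sum_sub_distrib]
        exact Finset.sum_congr rfl fun i _ => by rw [hsplit i]; abel
    _ = 0 := by rw [htot, hTin, sub_zero]
end

section
/- Let (G, p) be a framework in ℝ³ and let λ : E → ℝ. Then for each vertex i, ∑_{j : {i,j} ∈ E} λ {i,j} • (p̂ i ∧ p̂ j) = 0 in Λ²(ℝ⁴) if and only if ∑_{j : {i,j} ∈ E} λ {i,j} • (p j − p i) = 0 in ℝ³. Consequently λ is a projective self-stress of (G, p) if and only if λ is a self-stress of (G, p). -/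
/-!
Since `p̂ j - p̂ i = (p j - p i, 0)` and `p̂ i ∧ p̂ i = 0`, the projective sum at `i` equals
`p̂ i ∧ (S, 0)`, where `S` is the Euclidean sum at `i`. A wedge `a ∧ v` with `a₄ = 1` and `v₄ = 0`
vanishes only when `v = 0`: pairing it with `e₄* ∧ φ` gives `φ v` for every functional `φ`.
-/

open Matrix

namespace ExteriorAlgebra

variable {R M : Type*} [CommRing R] [AddCommGroup M] [Module R M]

noncomputable def pairingDual₂ (f g : Module.Dual R M) : ExteriorAlgebra R M →ₗ[R] R :=
  liftAlternating <| Pi.single 2 <|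
    (detRowAlternating (n := Fin 2)).compLinearMap (LinearMap.pi ![f, g])

theorem pairingDual₂_ι_mul_ι (f g : Module.Dual R M) (x y : M) :
    pairingDual₂ f g (ι R x * ι R y) = f x * g y - g x * f y := by
  rw [show ι R x * ι R y = ιMulti R 2 ![x, y] by simp [ιMulti_apply], pairingDual₂,
    liftAlternating_apply_ιMulti, Pi.single_eq_same, AlternatingMap.compLinearMap_apply]
  exact (det_fin_two _).trans (by simp)

theorem ι_mul_ι_eq_zero_iff [Module.Projective R M] {f : Module.Dual R M} {a v : M}
    (ha : f a = 1) (hv : f v = 0) : ι R a * ι R v = 0 ↔ v = 0 := by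
  refine ⟨fun h => (Module.forall_dual_apply_eq_zero_iff R v).1 fun g => ?_, fun h => by simp [h]⟩
  simpa [pairingDual₂_ι_mul_ι, ha, hv] using congrArg (pairingDual₂ f g) h

theorem sum_smul_ι_mul_ι {ι' : Type*} (s : Finset ι') (c : ι' → R) (a : M) (b : ι' → M) :
    ∑ j ∈ s, c j • (ι R a * ι R (b j)) = ι R a * ι R (∑ j ∈ s, c j • (b j - a)) := by
  simp only [map_sum, Finset.mul_sum, map_smul, mul_smul_comm, map_sub, mul_sub, ι_sq_zero,
    sub_zero]

end ExteriorAlgebra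

theorem Fin.snoc_zero_eq_zero_iff {n : ℕ} {M : Type*} [Zero M] (v : Fin n → M) :
    (Fin.snoc v 0 : Fin (n + 1) → M) = 0 ↔ v = 0 := by
  simp [funext_iff, Fin.forall_fin_succ']

theorem phat_last (x : Fin 3 → ℝ) : phat x (Fin.last 3) = 1 := Fin.snoc_last _ _

theorem sum_smul_phat_sub_phat {ι : Type*} (s : Finset ι) (c : ι → ℝ) (x : Fin 3 → ℝ)
    (q : ι → Fin 3 → ℝ) :
    ∑ j ∈ s, c j • (phat (q j) - phat x) = Fin.snoc (∑ j ∈ s, c j • (q j - x)) 0 := by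
  ext k
  induction k using Fin.lastCases with
  | last => simp only [Finset.sum_apply, Pi.smul_apply, Pi.sub_apply, phat, Fin.snoc_last]; simp
  | cast k => simp [phat, Finset.sum_apply]

theorem projective_selfStress_iff_selfStress_general {V : Type*} [Fintype V]
    (G : SimpleGraph V) [DecidableRel G.Adj] (p : V → Fin 3 → ℝ)
    (lam : Sym2 V → ℝ) :
    (∀ i : V,
      (∑ j ∈ G.neighborFinset i, lam s(i, j) • wedge (phat (p i)) (phat (p j)) = 0 ↔
       ∑ j ∈ G.neighborFinset i, lam s(i, j) • (p j - p i) = 0)) ∧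
    ((∀ i : V, ∑ j ∈ G.neighborFinset i, lam s(i, j) • wedge (phat (p i)) (phat (p j)) = 0) ↔
     (∀ i : V, ∑ j ∈ G.neighborFinset i, lam s(i, j) • (p j - p i) = 0)) := by
  have key : ∀ i : V,
      (∑ j ∈ G.neighborFinset i, lam s(i, j) • wedge (phat (p i)) (phat (p j)) = 0 ↔
       ∑ j ∈ G.neighborFinset i, lam s(i, j) • (p j - p i) = 0) := fun i => by
    simp only [wedge]
    rw [ExteriorAlgebra.sum_smul_ι_mul_ι, sum_smul_phat_sub_phat,
      ExteriorAlgebra.ι_mul_ι_eq_zero_iff (f := LinearMap.proj (Fin.last 3)) (phat_last (p i))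
        (by rw [LinearMap.proj_apply, Fin.snoc_last]), Fin.snoc_zero_eq_zero_iff]
  exact ⟨key, forall_congr' key⟩

/-- For every vertex `i`, the projective equilibrium condition
`∑_{j : {i,j} ∈ E} λ {i,j} • (p̂ i ∧ p̂ j) = 0` holds iff the Euclidean condition
`∑_{j : {i,j} ∈ E} λ {i,j} • (p j − p i) = 0` holds; consequently `λ` is a
projective self-stress iff `λ` is a self-stress. -/
theorem projective_selfStress_iff_selfStress {V : Type*} [Fintype V] [DecidableEq V]
    (G : SimpleGraph V) [DecidableRel G.Adj] (p : V → Fin 3 → ℝ)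
    (hframe : ∀ i j : V, G.Adj i j → p i ≠ p j)
    (lam : Sym2 V → ℝ) :
    (∀ i : V,
      (∑ j ∈ G.neighborFinset i, lam s(i, j) • wedge (phat (p i)) (phat (p j)) = 0 ↔
       ∑ j ∈ G.neighborFinset i, lam s(i, j) • (p j - p i) = 0)) ∧
    ((∀ i : V, ∑ j ∈ G.neighborFinset i, lam s(i, j) • wedge (phat (p i)) (phat (p j)) = 0) ↔
     (∀ i : V, ∑ j ∈ G.neighborFinset i, lam s(i, j) • (p j - p i) = 0)) :=
  projective_selfStress_iff_selfStress_general G p lam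
end

section
/- Let V be a finite type and let p : V → ℝ³ be not collinear. Then: (a) the linear map Φ : (V → ℝ³) → Λ²(ℝ⁴) defined by Φ f = ∑_i (f i, 0) ∧ (p i, 1) is surjective; (b) the kernel of Φ is exactly the space of equilibrium loads on (V, p); and hence (c) the space of equilibrium loads on (V, p) is a linear subspace of V → ℝ³ of dimension 3·|V| − 6. -/
open Matrix

/-- The space of equilibrium loads on a finite configuration `p : V → ℝ³`:
loads `f` with `∑ f i = 0` and `∑ (p i) ×₃ (f i) = 0`. -/
def eqLoads (V : Type*) [Fintype V] (p : V → Fin 3 → ℝ) :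
    Submodule ℝ (V → Fin 3 → ℝ) where
  carrier := {f | (∑ i, f i) = 0 ∧ (∑ i, (p i) ⨯₃ (f i)) = 0}
  zero_mem' := by simp
  add_mem' := by
    rintro f g ⟨hf1, hf2⟩ ⟨hg1, hg2⟩
    constructor
    · simp only [Pi.add_apply, Finset.sum_add_distrib, hf1, hg1, add_zero]
    · simp only [Pi.add_apply, map_add, Finset.sum_add_distrib, hf2, hg2, add_zero]
  smul_mem' := by
    rintro c f ⟨hf1, hf2⟩
    constructor
    · simp only [Pi.smul_apply, ← Finset.smul_sum, hf1, smul_zero]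
    · simp only [Pi.smul_apply, _root_.map_smul, ← Finset.smul_sum, hf2, smul_zero]

/-- The wedge product of two vectors of `ℝ⁴` as an element of the second exterior power
`Λ²(ℝ⁴)`. -/
noncomputable def wedge2 (x y : Fin 4 → ℝ) : ⋀[ℝ]^2 (Fin 4 → ℝ) :=
  ⟨ExteriorAlgebra.ι ℝ x * ExteriorAlgebra.ι ℝ y, by
    show _ ∈ LinearMap.range (ExteriorAlgebra.ι ℝ :
      (Fin 4 → ℝ) →ₗ[ℝ] ExteriorAlgebra ℝ (Fin 4 → ℝ)) ^ 2
    rw [pow_two]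
    exact Submodule.mul_mem_mul (LinearMap.mem_range_self _ x) (LinearMap.mem_range_self _ y)⟩

/-- The map `Φ : (V → ℝ³) → Λ²(ℝ⁴)`, `Φ f = ∑ i, (f i, 0) ∧ (p i, 1)`. -/
noncomputable def Phi {V : Type*} [Fintype V] (p : V → Fin 3 → ℝ)
    (f : V → Fin 3 → ℝ) : ⋀[ℝ]^2 (Fin 4 → ℝ) :=
  ∑ i, wedge2 (Fin.snoc (f i) 0) (Fin.snoc (p i) 1)

/-! In Plücker coordinates `x ∧ y ↦ (y₃ x̄ - x₃ ȳ, ȳ × x̄)` (with `x̄ = (x₀, x₁, x₂)`), which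
identify `Λ²(ℝ⁴)` with `ℝ³ × ℝ³`, the bivector `(f, 0) ∧ (p, 1)` has coordinates `(f, p × f)`.
Hence `Φ` becomes the resultant map `f ↦ (∑ fᵢ, ∑ pᵢ × fᵢ)`, whose kernel is the space of
equilibrium loads. The resultant map is onto: a functional `(F, M) ↦ a ⬝ F + b ⬝ M` killing its
image satisfies `b × pᵢ = -a` for every `i`, and for `b ≠ 0` the solutions `q` of `b × q = -a`
form a line, so non-collinearity forces `a = b = 0`. Both spaces having dimension 6, the
Plücker map is then an isomorphism, and rank–nullity gives the dimension `3|V| - 6`. -/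

section Plucker

variable {R : Type*} [CommRing R]

noncomputable def pluckerCoord {n : ℕ} (a b : Fin n) : (Fin n → R) [⋀^Fin 2]→ₗ[R] R :=
  Matrix.detRowAlternating.compLinearMap (LinearMap.funLeft R R ![a, b])

theorem pluckerCoord_apply {n : ℕ} (a b : Fin n) (x y : Fin n → R) :
    pluckerCoord a b ![x, y] = x a * y b - x b * y a := by
  change Matrix.det (Matrix.of fun i t => ![x, y] i (![a, b] t)) = _
  simp [Matrix.det_fin_two]

noncomputable def plucker : ⋀[R]^2 (Fin 4 → R) →ₗ[R] (Fin 3 → R) × (Fin 3 → R) :=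
  exteriorPower.alternatingMapLinearEquiv <|
    (AlternatingMap.pi fun j => pluckerCoord j.castSucc (Fin.last 3)).prod
      (AlternatingMap.pi fun j => pluckerCoord (j + 2).castSucc (j + 1).castSucc)

theorem plucker_ιMulti (x y : Fin 4 → R) :
    plucker (exteriorPower.ιMulti R 2 ![x, y]) =
      (y (Fin.last 3) • Fin.init x - x (Fin.last 3) • Fin.init y, Fin.init y ⨯₃ Fin.init x) := by
  rw [plucker, exteriorPower.alternatingMapLinearEquiv_apply_ιMulti]
  ext j <;> fin_cases j <;>
    simp only [Fin.isValue, Fin.reduceLast, Fin.reduceAdd, Fin.reduceFinMk, Fin.zero_eta,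
      Fin.mk_one, Fin.castSucc_zero, Fin.castSucc_one, Fin.reduceCastSucc, Fin.init,
      AlternatingMap.prod_apply, AlternatingMap.pi_apply, pluckerCoord_apply, cross_apply,
      Pi.sub_apply, Pi.smul_apply, smul_eq_mul, Matrix.cons_val] <;>
    ring

end Plucker

theorem wedge2_eq_ιMulti (x y : Fin 4 → ℝ) : wedge2 x y = exteriorPower.ιMulti ℝ 2 ![x, y] := by
  ext
  simp [wedge2, ExteriorAlgebra.ιMulti_apply]

theorem plucker_wedge2_snoc (u q : Fin 3 → ℝ) :
    plucker (wedge2 (Fin.snoc u 0) (Fin.snoc q 1)) = (u, q ⨯₃ u) := by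
  simp [wedge2_eq_ιMulti, plucker_ιMulti, Fin.init_snoc, -Fin.reduceLast]

section CrossProduct

variable {K : Type*} [Field K] [LinearOrder K] [IsStrictOrderedRing K]

theorem exists_eq_smul_of_cross_eq_zero {b v : Fin 3 → K} (hb : b ≠ 0) (h : b ⨯₃ v = 0) :
    ∃ r : K, v = r • b := by
  have hbb : b ⬝ᵥ b ≠ 0 := fun h => hb (dotProduct_self_eq_zero.mp h)
  refine ⟨(b ⬝ᵥ v) / (b ⬝ᵥ b), ?_⟩
  have key := cross_cross_eq_smul_sub_smul' b b v
  rw [h, map_zero, eq_comm, sub_eq_zero] at key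
  rw [div_eq_inv_mul, mul_smul, key, smul_smul, inv_mul_cancel₀ hbb, one_smul]

theorem collinear_setOf_cross_eq {b : Fin 3 → K} (hb : b ≠ 0) (c : Fin 3 → K) :
    Collinear K {q | b ⨯₃ q = c} := by
  rcases Set.eq_empty_or_nonempty {q | b ⨯₃ q = c} with hempty | ⟨q₀, hq₀⟩
  · rw [hempty]
    exact collinear_empty K _
  · rw [collinear_iff_of_mem hq₀]
    refine ⟨b, fun q hq => ?_⟩
    obtain ⟨r, hr⟩ := exists_eq_smul_of_cross_eq_zero hb
      (show b ⨯₃ (q - q₀) = 0 by rw [map_sub, hq, hq₀, sub_self])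
    exact ⟨r, by rw [vadd_eq_add, ← hr, sub_add_cancel]⟩

end CrossProduct

theorem exists_dotProduct_add_dotProduct {R n : Type*} [CommSemiring R] [Fintype n]
    [DecidableEq n] (h : (n → R) × (n → R) →ₗ[R] R) :
    ∃ a b : n → R, ∀ u v, h (u, v) = a ⬝ᵥ u + b ⬝ᵥ v := by
  refine ⟨(dotProductEquiv R n).symm (h ∘ₗ LinearMap.inl R _ _),
    (dotProductEquiv R n).symm (h ∘ₗ LinearMap.inr R _ _), fun u v => ?_⟩
  rw [← dotProductEquiv_apply_apply, ← dotProductEquiv_apply_apply, LinearEquiv.apply_symm_apply,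
    LinearEquiv.apply_symm_apply, LinearMap.comp_apply, LinearMap.comp_apply, ← map_add,
    LinearMap.inl_apply, LinearMap.inr_apply, Prod.mk_add_mk, add_zero, zero_add]

section Resultant

variable {V : Type*} [Fintype V]

noncomputable def resultant {R : Type*} [CommRing R] (p : V → Fin 3 → R) :
    (V → Fin 3 → R) →ₗ[R] (Fin 3 → R) × (Fin 3 → R) where
  toFun f := (∑ i, f i, ∑ i, p i ⨯₃ f i)
  map_add' f g := by simp [Finset.sum_add_distrib]
  map_smul' c f := by simp [Finset.smul_sum]

theorem resultant_apply {R : Type*} [CommRing R] (p f : V → Fin 3 → R) :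
    resultant p f = (∑ i, f i, ∑ i, p i ⨯₃ f i) := rfl

theorem resultant_single {R : Type*} [CommRing R] [DecidableEq V] (p : V → Fin 3 → R) (l : V)
    (u : Fin 3 → R) : resultant p (Pi.single l u) = (u, p l ⨯₃ u) := by
  simp [resultant_apply, Pi.single_apply, apply_ite]

theorem ker_resultant (p : V → Fin 3 → ℝ) : LinearMap.ker (resultant p) = eqLoads V p := by
  ext f
  exact Prod.mk_eq_zero

theorem resultant_surjective {K : Type*} [Field K] [LinearOrder K] [IsStrictOrderedRing K]
    {p : V → Fin 3 → K} (hp : ∃ i j k : V, AffineIndependent K ![p i, p j, p k]) :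
    Function.Surjective (resultant p) := by
  classical
  obtain ⟨i, j, k, hijk⟩ := hp
  rw [← LinearMap.dualMap_injective_iff, ← LinearMap.ker_eq_bot, LinearMap.ker_eq_bot']
  intro h hh
  obtain ⟨a, b, hab⟩ := exists_dotProduct_add_dotProduct h
  have hmoment : ∀ l, b ⨯₃ p l = -a := by
    intro l
    rw [eq_neg_iff_add_eq_zero, add_comm, ← dotProduct_eq_zero_iff]
    intro u
    have hu := LinearMap.congr_fun hh (Pi.single l u)
    rw [LinearMap.dualMap_apply, resultant_single, hab, triple_product_permutation,
      triple_product_permutation] at hu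
    rwa [add_dotProduct, dotProduct_comm (b ⨯₃ p l)]
  have hb : b = 0 := by
    by_contra hb
    refine affineIndependent_iff_not_collinear_set.mp hijk
      ((collinear_setOf_cross_eq hb (-a)).subset ?_)
    rintro _ (rfl | rfl | rfl) <;> exact hmoment _
  have ha : a = 0 := by simpa [hb] using hmoment i
  refine LinearMap.ext fun ⟨u, v⟩ => ?_
  rw [hab, ha, hb, zero_dotProduct, zero_dotProduct, add_zero]
  rfl

theorem plucker_Phi (p f : V → Fin 3 → ℝ) : plucker (Phi p f) = resultant p f := by
  simp only [Phi, map_sum, plucker_wedge2_snoc, resultant_apply]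
  exact Prod.ext (Prod.fst_sum ..) (Prod.snd_sum ..)

end Resultant

/-- If `p` is not collinear then (a) `Φ` is surjective onto `Λ²(ℝ⁴)`, (b) the kernel of `Φ`
is exactly the space of equilibrium loads on `(V, p)`, and (c) the space of equilibrium
loads has dimension `3·|V| − 6`. -/
theorem Phi_surjective_ker_eqLoads_finrank {V : Type*} [Fintype V]
    (p : V → Fin 3 → ℝ)
    (hp : ∃ i j k : V, AffineIndependent ℝ ![p i, p j, p k]) :
    Function.Surjective (Phi p) ∧
    (∀ f : V → Fin 3 → ℝ, Phi p f = 0 ↔ f ∈ eqLoads V p) ∧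
    Module.finrank ℝ (eqLoads V p) = 3 * Fintype.card V - 6 := by
  have hres := resultant_surjective hp
  have hsurj : Function.Surjective (plucker : ⋀[ℝ]^2 (Fin 4 → ℝ) →ₗ[ℝ] _) := fun w =>
    let ⟨f, hf⟩ := hres w
    ⟨Phi p f, (plucker_Phi p f).trans hf⟩
  have hinj : Function.Injective (plucker : ⋀[ℝ]^2 (Fin 4 → ℝ) →ₗ[ℝ] _) :=
    (LinearMap.injective_iff_surjective_of_finrank_eq_finrank
      (by simp [exteriorPower.finrank_eq, Nat.choose])).mpr hsurj
  refine ⟨fun z => ?_, fun f => ?_, ?_⟩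
  · obtain ⟨f, hf⟩ := hres (plucker z)
    exact ⟨f, hinj ((plucker_Phi p f).trans hf)⟩
  · rw [← ker_resultant, LinearMap.mem_ker, ← plucker_Phi, map_eq_zero_iff _ hinj]
  · have hrank := LinearMap.finrank_range_add_finrank_ker (resultant p)
    rw [LinearMap.range_eq_top.mpr hres, finrank_top, ker_resultant] at hrank
    simp only [Module.finrank_prod, Module.finrank_pi_fintype, Module.finrank_self,
      Finset.sum_const, Finset.card_univ, Fintype.card_fin, smul_eq_mul] at hrank
    omega
end

section
/- (Isostatic Substitution Principle.) Let V be a finite type, p : V → ℝ³, and V' ⊆ V. Let E₀ be a set of edges on V, and let E' and E'' be sets of edges with both endpoints in V', with E₀ disjoint from E' ∪ E''. Suppose that the subframeworks (V', E', p|V') and (V', E'', p|V') are both isostatic. Then: (a) the span in V → ℝ³ of the bar loads of the edges of E₀ ∪ E' equals the span of the bar loads of the edges of E₀ ∪ E'' (the two frameworks have the same space of resolvable loads); and (b) the space of self-stresses of the framework ((V, E₀ ∪ E'), p) and the space of self-stresses of the framework ((V, E₀ ∪ E''), p) have the same finite dimension. -/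
/-!
An isostatic framework on `V'` has linearly independent bar loads spanning all equilibrium loads
on `V'`; extended by zero to `V`, they therefore span the same space whichever isostatic framework
on `V'` is chosen, so the two spans agree, and both frameworks have `dim (eqLoads V')` edges.
Self-stresses are exactly the linear dependencies among the bar loads, so by rank–nullity
`dim stresses = #edges - dim span`, and both sides of the second claim equal
`#E₀ + dim (eqLoads V') - dim span`.
-/

open Matrix

/-- The bar load of the edge `{i, j}`. -/
def barLoad {V : Type*} [DecidableEq V] (p : V → Fin 3 → ℝ) : Sym2 V → (V → Fin 3 → ℝ) :=
  Sym2.lift ⟨fun i j k => if k = i then p i - p j else if k = j then p j - p i else 0,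
    by
      intro i j
      funext k
      by_cases hi : k = i <;> by_cases hj : k = j <;> simp_all⟩

/-- A framework with edge set `E` is isostatic when the family of its bar loads is
linearly independent and spans the space of equilibrium loads. -/
def IsIsostatic {V : Type*} [Fintype V] [DecidableEq V]
    (E : Finset (Sym2 V)) (p : V → Fin 3 → ℝ) : Prop :=
  LinearIndependent ℝ (fun e : E => barLoad p (e : Sym2 V)) ∧
  Submodule.span ℝ (barLoad p '' (E : Set (Sym2 V))) = eqLoads V p

/-- The space of self-stresses of the framework with edge set `E` and configuration `p`:
scalars on the edges, vanishing off `E`, in equilibrium at every vertex. -/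
def stressSpace {V : Type*} [Fintype V] [DecidableEq V]
    (E : Finset (Sym2 V)) (p : V → Fin 3 → ℝ) : Submodule ℝ (Sym2 V → ℝ) where
  carrier := {lam | (∀ e ∉ E, lam e = 0) ∧
    ∀ i : V, ∑ j ∈ Finset.univ.filter (fun j => s(i, j) ∈ E), lam s(i, j) • (p j - p i) = 0}
  zero_mem' := by simp
  add_mem' := by
    rintro f g ⟨hf0, hf⟩ ⟨hg0, hg⟩
    constructor
    · intro e he; simp [hf0 e he, hg0 e he]
    · intro i
      simp only [Pi.add_apply, add_smul, Finset.sum_add_distrib, hf i, hg i, add_zero]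
  smul_mem' := by
    rintro c f ⟨hf0, hf⟩
    constructor
    · intro e he; simp [hf0 e he]
    · intro i
      simp only [Pi.smul_apply, smul_eq_mul, SemigroupAction.mul_smul, ← Finset.smul_sum, hf i,
        smul_zero]

section BarLoad

variable {V : Type*} [DecidableEq V]

lemma barLoad_mk_apply (p : V → Fin 3 → ℝ) (a b k : V) :
    barLoad p s(a, b) k = if k = a then p a - p b else if k = b then p b - p a else 0 := rfl

lemma barLoad_apply_of_notMem (p : V → Fin 3 → ℝ) {e : Sym2 V} {i : V} (h : i ∉ e) :
    barLoad p e i = 0 := by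
  induction e using Sym2.ind with
  | _ a b =>
    rw [Sym2.mem_iff, not_or] at h
    simp [barLoad_mk_apply, h.1, h.2]

def extendByZero {R M : Type*} [Semiring R] [AddCommMonoid M] [Module R M] (V' : Finset V) :
    (V' → M) →ₗ[R] (V → M) where
  toFun g v := if h : v ∈ V' then g ⟨v, h⟩ else 0
  map_add' g h := by funext v; by_cases hv : v ∈ V' <;> simp [hv]
  map_smul' c g := by funext v; by_cases hv : v ∈ V' <;> simp [hv]

lemma barLoad_map_val (p : V → Fin 3 → ℝ) (V' : Finset V) (e : Sym2 V') :
    barLoad p (e.map (↑)) = extendByZero (R := ℝ) V' (barLoad (fun v : V' => p v) e) := by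
  induction e using Sym2.ind with
  | _ a b =>
    funext k
    by_cases hk : k ∈ V'
    · lift k to V' using hk
      simp [extendByZero, barLoad_mk_apply]
    · have ha : k ≠ a := fun h => hk (h ▸ a.2)
      have hb : k ≠ b := fun h => hk (h ▸ b.2)
      simp [extendByZero, barLoad_mk_apply, hk, ha, hb]

lemma span_barLoad_image_map_val (p : V → Fin 3 → ℝ) (V' : Finset V) (E : Finset (Sym2 V')) :
    Submodule.span ℝ (barLoad p '' (E.image (Sym2.map (↑· : V' → V)) : Set (Sym2 V))) =
      (Submodule.span ℝ (barLoad (fun v : V' => p v) '' (E : Set (Sym2 V')))).map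
        (extendByZero V') := by
  rw [Finset.coe_image, ← Set.image_comp, ← Submodule.span_image, ← Set.image_comp]
  congr 2
  funext e
  exact barLoad_map_val p V' e

end BarLoad

section Stress

variable {V : Type*} [Fintype V] [DecidableEq V]

lemma sum_smul_barLoad_apply (p : V → Fin 3 → ℝ) (E : Finset (Sym2 V)) (lam : Sym2 V → ℝ)
    (i : V) :
    ∑ e ∈ E, lam e • barLoad p e i =
      -∑ j ∈ Finset.univ.filter (fun j => s(i, j) ∈ E), lam s(i, j) • (p j - p i) := by
  set N := Finset.univ.filter (fun j => s(i, j) ∈ E)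
  have hinj : Set.InjOn (fun j => s(i, j)) N := fun j _ j' _ h => Sym2.congr_right.1 h
  have hsub : N.image (fun j => s(i, j)) ⊆ E := by
    simp only [Finset.image_subset_iff, N, Finset.mem_filter]
    exact fun _ h => h.2
  have hvanish : ∀ e ∈ E, e ∉ N.image (fun j => s(i, j)) → lam e • barLoad p e i = 0 := by
    intro e he hne
    have hi : i ∉ e := fun hi => hne <| Finset.mem_image.2
      ⟨Sym2.Mem.other hi, by simp [N, he], Sym2.other_spec hi⟩
    rw [barLoad_apply_of_notMem p hi, smul_zero]
  rw [← Finset.sum_subset hsub hvanish, Finset.sum_image hinj, ← Finset.sum_neg_distrib]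
  refine Finset.sum_congr rfl fun j _ => ?_
  simp [barLoad_mk_apply, ← smul_neg]

lemma mem_stressSpace_iff_sum_smul_barLoad {E : Finset (Sym2 V)} {p : V → Fin 3 → ℝ}
    {lam : Sym2 V → ℝ} :
    lam ∈ stressSpace E p ↔ (∀ e ∉ E, lam e = 0) ∧ ∑ e ∈ E, lam e • barLoad p e = 0 := by
  refine and_congr_right fun _ => ?_
  rw [funext_iff]
  simp only [Finset.sum_apply, Pi.smul_apply, sum_smul_barLoad_apply, Pi.zero_apply, neg_eq_zero]

def stressSpaceRestrict (E : Finset (Sym2 V)) (p : V → Fin 3 → ℝ) :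
    stressSpace E p →ₗ[ℝ] (E → ℝ) where
  toFun lam e := lam.1 e
  map_add' _ _ := rfl
  map_smul' _ _ := rfl

lemma stressSpaceRestrict_injective (E : Finset (Sym2 V)) (p : V → Fin 3 → ℝ) :
    Function.Injective (stressSpaceRestrict E p) := by
  intro lam mu h
  ext e
  by_cases he : e ∈ E
  · exact congrFun h ⟨e, he⟩
  · rw [(mem_stressSpace_iff_sum_smul_barLoad.1 lam.2).1 e he,
      (mem_stressSpace_iff_sum_smul_barLoad.1 mu.2).1 e he]

lemma range_stressSpaceRestrict (E : Finset (Sym2 V)) (p : V → Fin 3 → ℝ) :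
    LinearMap.range (stressSpaceRestrict E p) =
      LinearMap.ker (Fintype.linearCombination ℝ fun e : E => barLoad p e) := by
  ext mu
  simp only [LinearMap.mem_range, LinearMap.mem_ker, Fintype.linearCombination_apply]
  constructor
  · rintro ⟨lam, rfl⟩
    rw [← (mem_stressSpace_iff_sum_smul_barLoad.1 lam.2).2, ← Finset.sum_coe_sort E]
    rfl
  · intro hmu
    let lam : Sym2 V → ℝ := fun e => if h : e ∈ E then mu ⟨e, h⟩ else 0
    have hlam : lam ∈ stressSpace E p := by
      refine mem_stressSpace_iff_sum_smul_barLoad.2 ⟨fun e he => dif_neg he, ?_⟩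
      rw [← Finset.sum_coe_sort E, ← hmu]
      exact Finset.sum_congr rfl fun e _ => by simp [lam]
    exact ⟨⟨lam, hlam⟩, funext fun e => dif_pos e.2⟩

lemma finrank_stressSpace_add_finrank_span (E : Finset (Sym2 V)) (p : V → Fin 3 → ℝ) :
    Module.finrank ℝ (stressSpace E p) +
      Module.finrank ℝ (Submodule.span ℝ (barLoad p '' (E : Set (Sym2 V)))) = E.card := by
  set L := Fintype.linearCombination ℝ fun e : E => barLoad p e
  have hker : Module.finrank ℝ (stressSpace E p) = Module.finrank ℝ (LinearMap.ker L) := by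
    rw [← range_stressSpaceRestrict,
      LinearMap.finrank_range_of_inj (stressSpaceRestrict_injective E p)]
  have hrange : LinearMap.range L = Submodule.span ℝ (barLoad p '' (E : Set (Sym2 V))) := by
    rw [Fintype.range_linearCombination, Set.image_eq_range]
    rfl
  have := L.finrank_range_add_finrank_ker
  rw [hrange, Module.finrank_fintype_fun_eq_card, Fintype.card_coe] at this
  omega

lemma IsIsostatic.card_eq_finrank {E : Finset (Sym2 V)} {p : V → Fin 3 → ℝ}
    (h : IsIsostatic E p) : E.card = Module.finrank ℝ (eqLoads V p) := by
  rw [← h.2, Set.image_eq_range, ← Fintype.card_coe, ← finrank_span_eq_card h.1]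
  rfl

lemma IsIsostatic.finrank_stressSpace_union_add_finrank_span {p : V → Fin 3 → ℝ}
    {V' : Finset V} {E₀ : Finset (Sym2 V)} {E : Finset (Sym2 V')}
    (hiso : IsIsostatic E fun v : V' => p v)
    (hdisj : Disjoint E₀ (E.image (Sym2.map (↑· : V' → V)))) :
    Module.finrank ℝ (stressSpace (E₀ ∪ E.image (Sym2.map (↑· : V' → V))) p) +
        Module.finrank ℝ (Submodule.span ℝ
          (barLoad p '' ((E₀ ∪ E.image (Sym2.map (↑· : V' → V))) : Finset (Sym2 V)))) =
      E₀.card + Module.finrank ℝ (eqLoads V' fun v : V' => p v) := by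
  rw [finrank_stressSpace_add_finrank_span, Finset.card_union_of_disjoint hdisj,
    Finset.card_image_of_injective _ (Sym2.map.injective Subtype.coe_injective),
    hiso.card_eq_finrank]

end Stress

theorem isostatic_substitution_general {V : Type*} [Fintype V] [DecidableEq V]
    (p : V → Fin 3 → ℝ) (V' : Finset V)
    (E₀ : Finset (Sym2 V)) (E' E'' : Finset (Sym2 ↥V'))
    (hdisj : Disjoint E₀
      (E'.image (Sym2.map (↑· : ↥V' → V)) ∪ E''.image (Sym2.map (↑· : ↥V' → V))))
    (hiso' : IsIsostatic E' (fun v : ↥V' => p v))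
    (hiso'' : IsIsostatic E'' (fun v : ↥V' => p v)) :
    Submodule.span ℝ
        (barLoad p '' ((E₀ ∪ E'.image (Sym2.map (↑· : ↥V' → V))) : Finset (Sym2 V))) =
      Submodule.span ℝ
        (barLoad p '' ((E₀ ∪ E''.image (Sym2.map (↑· : ↥V' → V))) : Finset (Sym2 V))) ∧
    Module.finrank ℝ (stressSpace (E₀ ∪ E'.image (Sym2.map (↑· : ↥V' → V))) p) =
      Module.finrank ℝ (stressSpace (E₀ ∪ E''.image (Sym2.map (↑· : ↥V' → V))) p) := by
  have hspan : Submodule.span ℝ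
        (barLoad p '' ((E₀ ∪ E'.image (Sym2.map (↑· : ↥V' → V))) : Finset (Sym2 V))) =
      Submodule.span ℝ
        (barLoad p '' ((E₀ ∪ E''.image (Sym2.map (↑· : ↥V' → V))) : Finset (Sym2 V))) := by
    simp only [Finset.coe_union, Set.image_union, Submodule.span_union,
      span_barLoad_image_map_val, hiso'.2, hiso''.2]
  refine ⟨hspan, ?_⟩
  obtain ⟨hdisj', hdisj''⟩ := Finset.disjoint_union_right.1 hdisj
  have h' := hiso'.finrank_stressSpace_union_add_finrank_span hdisj'
  have h'' := hiso''.finrank_stressSpace_union_add_finrank_span hdisj''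
  rw [hspan] at h'
  omega

/-- Isostatic Substitution Principle: replacing an isostatic subframework on the vertex set
`V'` by another isostatic subframework on the same vertices leaves the span of the bar
loads (the resolvable loads) unchanged and preserves the dimension of the space of
self-stresses. -/
theorem isostatic_substitution {V : Type*} [Fintype V] [DecidableEq V]
    (p : V → Fin 3 → ℝ) (V' : Finset V)
    (E₀ : Finset (Sym2 V)) (E' E'' : Finset (Sym2 ↥V'))
    (hdisj : Disjoint E₀
      (E'.image (Sym2.map (↑· : ↥V' → V)) ∪ E''.image (Sym2.map (↑· : ↥V' → V))))
    (hframe₀ : ∀ i j : V, s(i, j) ∈ E₀ → p i ≠ p j)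
    (hframe' : ∀ i j : ↥V', s(i, j) ∈ E' → p i ≠ p j)
    (hframe'' : ∀ i j : ↥V', s(i, j) ∈ E'' → p i ≠ p j)
    (hiso' : IsIsostatic E' (fun v : ↥V' => p v))
    (hiso'' : IsIsostatic E'' (fun v : ↥V' => p v)) :
    Submodule.span ℝ
        (barLoad p '' ((E₀ ∪ E'.image (Sym2.map (↑· : ↥V' → V))) : Finset (Sym2 V))) =
      Submodule.span ℝ
        (barLoad p '' ((E₀ ∪ E''.image (Sym2.map (↑· : ↥V' → V))) : Finset (Sym2 V))) ∧
    Module.finrank ℝ (stressSpace (E₀ ∪ E'.image (Sym2.map (↑· : ↥V' → V))) p) =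
      Module.finrank ℝ (stressSpace (E₀ ∪ E''.image (Sym2.map (↑· : ↥V' → V))) p) :=
  isostatic_substitution_general p V' E₀ E' E'' hdisj hiso' hiso''
end

section
/- (3-valent vertex addition preserves infinitesimal motions.) Let (G, p) be a framework in ℝ³, let a, b, c be three distinct vertices of G, and let G' be the graph obtained from G by adding one new vertex v₀ together with the three edges {v₀, a}, {v₀, b}, {v₀, c}. Let q ∈ ℝ³ be such that the four points q, p a, p b, p c are affinely independent (q is not coplanar with p a, p b, p c), and let p' extend p by p' v₀ = q. Then the restriction map v ↦ v|_{V(G)} is a linear isomorphism from the space of infinitesimal motions of (G', p') onto the space of infinitesimal motions of (G, p); in particular, every infinitesimal motion of (G, p) extends in exactly one way to an infinitesimal motion of (G', p'). -/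
open Matrix

/-- The space of infinitesimal motions of the framework `(G, p)`:
velocities `v` with `⟨p i − p j, v i − v j⟩ = 0` on every edge. -/
def motionSpace {V : Type*} (G : SimpleGraph V) (p : V → Fin 3 → ℝ) :
    Submodule ℝ (V → Fin 3 → ℝ) where
  carrier := {v | ∀ i j : V, G.Adj i j → (p i - p j) ⬝ᵥ (v i - v j) = 0}
  zero_mem' := by simp
  add_mem' := by
    intro f g hf hg i j hij
    have h : (f + g) i - (f + g) j = (f i - f j) + (g i - g j) := by
      simp only [Pi.add_apply]; abel
    rw [h, dotProduct_add, hf i j hij, hg i j hij, add_zero]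
  smul_mem' := by
    intro c f hf i j hij
    have h : (c • f) i - (c • f) j = c • (f i - f j) := by
      simp only [Pi.smul_apply, smul_sub]
    rw [h, dotProduct_smul, hf i j hij, smul_zero]

/-- The graph `G'` obtained from `G` by adding one new vertex (`none`) joined to the three
vertices `a`, `b`, `c`. -/
def addVertex {V : Type*} (G : SimpleGraph V) (a b c : V) : SimpleGraph (Option V) where
  Adj x y :=
    match x, y with
    | some i, some j => G.Adj i j
    | none, some j => j = a ∨ j = b ∨ j = c
    | some i, none => i = a ∨ i = b ∨ i = c
    | none, none => False
  symm := ⟨by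
    rintro (_ | i) (_ | j) h
    · exact h
    · exact h
    · exact h
    · exact G.adj_symm h⟩
  loopless := ⟨by
    rintro (_ | i) h
    · exact h
    · exact G.irrefl h⟩

/-! The velocity `w` of the new vertex enters only through the three edge constraints
`⟨p x - q, w⟩ = ⟨p x - q, v x⟩` for `x = a, b, c`. Affine independence of `q, p a, p b, p c`
makes the coefficient vectors `p x - q` linearly independent, so this square system has exactly
one solution: every motion of `(G, p)` extends uniquely, and restriction is bijective. -/

theorem AffineIndependent.linearIndependent_vsub_zero {k V P : Type*} [Ring k] [AddCommGroup V]
    [Module k V] [AddTorsor V P] {n : ℕ} {p : Fin (n + 1) → P} (hp : AffineIndependent k p) :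
    LinearIndependent k fun i : Fin n => p i.succ -ᵥ p 0 :=
  ((affineIndependent_iff_linearIndependent_vsub k p 0).1 hp).comp
    (fun i => ⟨i.succ, i.succ_ne_zero⟩) fun _ _ h => Fin.succ_injective _ (congrArg Subtype.val h)

theorem existsUnique_forall_dotProduct_eq {K ι : Type*} [Field K] [Fintype ι] [DecidableEq ι]
    {u : ι → ι → K} (hu : LinearIndependent K u) (r : ι → K) :
    ∃! w : ι → K, ∀ i, u i ⬝ᵥ w = r i := by
  have hA : IsUnit (of u) := linearIndependent_rows_iff_isUnit.1 hu
  have h := Function.Bijective.existsUnique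
    ⟨mulVec_injective_iff_isUnit.2 hA, mulVec_surjective_iff_isUnit.2 hA⟩ r
  simp only [funext_iff] at h
  exact h

theorem mem_motionSpace_addVertex_iff {V : Type*} {G : SimpleGraph V} {a b c : V}
    {p v : Option V → Fin 3 → ℝ} :
    v ∈ motionSpace (addVertex G a b c) p ↔
      (fun i => v (some i)) ∈ motionSpace G (fun i => p (some i)) ∧
        ∀ k : Fin 3,
          (p (some (![a, b, c] k)) - p none) ⬝ᵥ (v (some (![a, b, c] k)) - v none) = 0 := by
  refine ⟨fun hv => ⟨fun i j h => hv (some i) (some j) h, fun k => hv _ none ?_⟩, ?_⟩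
  · fin_cases k <;> simp [addVertex]
  · rintro ⟨hG, hstar⟩ (_ | i) (_ | j) h
    · exact h.elim
    · rw [← neg_sub (p (some j)), ← neg_sub (v (some j)), neg_dotProduct_neg]
      rcases h with rfl | rfl | rfl
      exacts [hstar 0, hstar 1, hstar 2]
    · rcases h with rfl | rfl | rfl
      exacts [hstar 0, hstar 1, hstar 2]
    · exact hG i j h

theorem existsUnique_extension_mem_motionSpace_addVertex {V : Type*} {G : SimpleGraph V}
    {p : V → Fin 3 → ℝ} {a b c : V} {q : Fin 3 → ℝ}
    (hu : LinearIndependent ℝ fun k => p (![a, b, c] k) - q) {v : V → Fin 3 → ℝ}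
    (hv : v ∈ motionSpace G p) :
    ∃! v' : Option V → Fin 3 → ℝ,
      v' ∈ motionSpace (addVertex G a b c) (fun x => x.elim q p) ∧ ∀ i, v' (some i) = v i := by
  obtain ⟨w, hw, hw_unique⟩ := existsUnique_forall_dotProduct_eq hu
    fun k => (p (![a, b, c] k) - q) ⬝ᵥ v (![a, b, c] k)
  have hmem_iff : ∀ v' : Option V → Fin 3 → ℝ, (∀ i, v' (some i) = v i) →
      (v' ∈ motionSpace (addVertex G a b c) (fun x => x.elim q p) ↔
        ∀ k, (p (![a, b, c] k) - q) ⬝ᵥ v' none = (p (![a, b, c] k) - q) ⬝ᵥ v (![a, b, c] k)) := by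
    intro v' hv'
    simp only [mem_motionSpace_addVertex_iff, Option.elim, hv', dotProduct_sub, sub_eq_zero,
      eq_comm (a := (p _ - q) ⬝ᵥ v _)]
    exact and_iff_right hv
  refine ⟨fun x => x.elim w v, ⟨(hmem_iff _ fun _ => rfl).2 hw, fun _ => rfl⟩, ?_⟩
  rintro v' ⟨hv'_mem, hv'_ext⟩
  funext x
  cases x with
  | none => exact hw_unique _ ((hmem_iff v' hv'_ext).1 hv'_mem)
  | some i => exact hv'_ext i

theorem threeValent_addition_motion_general {V : Type*}
    (G : SimpleGraph V) (p : V → Fin 3 → ℝ)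
    (a b c : V)
    (q : Fin 3 → ℝ) (hq : AffineIndependent ℝ ![q, p a, p b, p c]) :
    (∃ φ : motionSpace (addVertex G a b c) (fun x => x.elim q p) ≃ₗ[ℝ] motionSpace G p,
      ∀ (v : motionSpace (addVertex G a b c) (fun x => x.elim q p)) (i : V),
        (φ v : V → Fin 3 → ℝ) i = (v : Option V → Fin 3 → ℝ) (some i)) ∧
    ∀ v ∈ motionSpace G p, ∃! v' : Option V → Fin 3 → ℝ,
      v' ∈ motionSpace (addVertex G a b c) (fun x => x.elim q p) ∧
        ∀ i : V, v' (some i) = v i := by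
  have hu : LinearIndependent ℝ fun k => p (![a, b, c] k) - q := by
    have h := hq.linearIndependent_vsub_zero
    have hvec : (fun i : Fin 3 => ![q, p a, p b, p c] i.succ -ᵥ ![q, p a, p b, p c] 0) =
        fun k => p (![a, b, c] k) - q := by
      funext k
      fin_cases k <;> rfl
    rwa [hvec] at h
  have hext := fun v (hv : v ∈ motionSpace G p) =>
    existsUnique_extension_mem_motionSpace_addVertex hu hv
  let restrict : motionSpace (addVertex G a b c) (fun x => x.elim q p) →ₗ[ℝ] motionSpace G p :=
    (LinearMap.funLeft ℝ (Fin 3 → ℝ) some).restrict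
      fun _ hv' => (mem_motionSpace_addVertex_iff.1 hv').1
  have hbij : Function.Bijective restrict := by
    refine ⟨fun x y hxy => Subtype.ext ?_, fun ⟨v, hv⟩ => ?_⟩
    · refine (hext _ (restrict x).2).unique ⟨x.2, fun _ => rfl⟩ ⟨y.2, fun i => ?_⟩
      exact congrFun (congrArg Subtype.val hxy.symm) i
    · obtain ⟨v', ⟨hv'_mem, hv'_ext⟩, -⟩ := hext v hv
      exact ⟨⟨v', hv'_mem⟩, Subtype.ext (funext hv'_ext)⟩
  exact ⟨⟨.ofBijective restrict hbij, fun _ _ => rfl⟩, hext⟩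

/-- 3-valent vertex addition preserves infinitesimal motions: restriction is a linear
isomorphism of motion spaces; in particular, every infinitesimal motion of `(G, p)` extends
in exactly one way to an infinitesimal motion of `(G', p')`. -/
theorem threeValent_addition_motion {V : Type*} [Fintype V] [DecidableEq V]
    (G : SimpleGraph V) [DecidableRel G.Adj] (p : V → Fin 3 → ℝ)
    (hframe : ∀ i j : V, G.Adj i j → p i ≠ p j)
    (a b c : V) (hab : a ≠ b) (hac : a ≠ c) (hbc : b ≠ c)
    (q : Fin 3 → ℝ) (hq : AffineIndependent ℝ ![q, p a, p b, p c]) :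
    (∃ φ : motionSpace (addVertex G a b c) (fun x => x.elim q p) ≃ₗ[ℝ] motionSpace G p,
      ∀ (v : motionSpace (addVertex G a b c) (fun x => x.elim q p)) (i : V),
        (φ v : V → Fin 3 → ℝ) i = (v : Option V → Fin 3 → ℝ) (some i)) ∧
    ∀ v ∈ motionSpace G p, ∃! v' : Option V → Fin 3 → ℝ,
      v' ∈ motionSpace (addVertex G a b c) (fun x => x.elim q p) ∧
        ∀ i : V, v' (some i) = v i :=
  threeValent_addition_motion_general G p a b c q hq
end

section
/- (Projective invariance of self-stresses.) Let G = (V, E) be a finite simple graph, let q : V → ℝ⁴ be homogeneous coordinates for the joints, let λ : E → ℝ, and let T : ℝ⁴ → ℝ⁴ be a linear automorphism. Then, for every vertex i, ∑_{j : {i,j} ∈ E} λ {i,j} • (q i ∧ q j) = 0 in Λ²(ℝ⁴) holds if and only if, for every vertex i, ∑_{j : {i,j} ∈ E} λ {i,j} • ((T (q i)) ∧ (T (q j))) = 0 in Λ²(ℝ⁴) holds. In particular the space of self-stresses in homogeneous coordinates is unchanged under projective transformations of the configuration. -/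
open Matrix

lemma map_wedge (f : (Fin 4 → ℝ) →ₗ[ℝ] (Fin 4 → ℝ)) (x y : Fin 4 → ℝ) :
    ExteriorAlgebra.map f (wedge x y) = wedge (f x) (f y) := by
  simp [wedge, ExteriorAlgebra.map_apply_ι]

lemma selfStress_map_aux {V : Type*} [Fintype V] [DecidableEq V]
    (G : SimpleGraph V) [DecidableRel G.Adj]
    (q : V → Fin 4 → ℝ) (lam : Sym2 V → ℝ)
    (f : (Fin 4 → ℝ) →ₗ[ℝ] (Fin 4 → ℝ))
    (h : ∀ i : V, ∑ j ∈ G.neighborFinset i, lam s(i, j) • wedge (q i) (q j) = 0) :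
    ∀ i : V, ∑ j ∈ G.neighborFinset i, lam s(i, j) • wedge (f (q i)) (f (q j)) = 0 := by
  intro i
  have := congrArg (ExteriorAlgebra.map f) (h i)
  simpa [map_sum, map_wedge] using this

/-- Projective invariance of self-stresses: for homogeneous coordinates `q : V → ℝ⁴`,
a scalar assignment `λ` on the edges, and a linear automorphism `T` of `ℝ⁴`,
`λ` is a self-stress for the configuration `q` iff it is a self-stress for the
configuration `T ∘ q`. -/
theorem selfStress_projective_invariance {V : Type*} [Fintype V] [DecidableEq V]
    (G : SimpleGraph V) [DecidableRel G.Adj]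
    (q : V → Fin 4 → ℝ) (lam : Sym2 V → ℝ)
    (T : (Fin 4 → ℝ) ≃ₗ[ℝ] (Fin 4 → ℝ)) :
    (∀ i : V, ∑ j ∈ G.neighborFinset i, lam s(i, j) • wedge (q i) (q j) = 0) ↔
    (∀ i : V, ∑ j ∈ G.neighborFinset i, lam s(i, j) • wedge (T (q i)) (T (q j)) = 0) := by
  constructor
  · exact selfStress_map_aux G q lam T.toLinearMap
  · intro h
    have := selfStress_map_aux G (fun v => T (q v)) lam T.symm.toLinearMap h
    simpa using this
end

section
/- (Equivalence of static and first-order rigidity.) Let (G, p) be a framework in ℝ³ with p not collinear. Then the span of the bar loads of (G, p) equals the space of equilibrium loads on (V, p) (static rigidity) if and only if every infinitesimal motion of (G, p) is a trivial motion (first-order rigidity). -/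
open Matrix

/-- The space of trivial motions of the configuration `p`: maps `i ↦ t + ω ×₃ (p i)`. -/
def trivialMotions (V : Type*) (p : V → Fin 3 → ℝ) : Submodule ℝ (V → Fin 3 → ℝ) where
  carrier := {v | ∃ t ω : Fin 3 → ℝ, v = fun i => t + ω ⨯₃ (p i)}
  zero_mem' := ⟨0, 0, by funext i; simp⟩
  add_mem' := by
    rintro f g ⟨t₁, ω₁, rfl⟩ ⟨t₂, ω₂, rfl⟩
    exact ⟨t₁ + t₂, ω₁ + ω₂, by
      funext i
      simp only [Pi.add_apply, map_add, LinearMap.add_apply]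
      abel⟩
  smul_mem' := by
    rintro c f ⟨t, ω, rfl⟩
    exact ⟨c • t, c • ω, by
      funext i
      simp only [Pi.smul_apply, _root_.map_smul, LinearMap.smul_apply, smul_add]⟩

/-!
Pair loads and velocity fields by `⟪f, v⟫ = ∑ i, f i ⬝ᵥ v i`. The bar load of `{i, j}` pairs with
`v` to `(p i - p j) ⬝ᵥ (v i - v j)`, so the infinitesimal motions are the annihilator of the bar
loads; a trivial motion pairs with `f` to `t ⬝ᵥ ∑ f i + ω ⬝ᵥ ∑ p i ⨯₃ f i`, so the equilibrium loads
are the annihilator of the trivial motions. Trivial motions are infinitesimal motions, hence bar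
loads are equilibrium loads, and in finite dimension the inclusion of the span of the bar loads
in the equilibrium loads is an equality iff the reverse inclusion holds between the annihilators.
-/

lemma Submodule.mem_orthogonal_span_iff {𝕜 E : Type*} [RCLike 𝕜] [NormedAddCommGroup E]
    [InnerProductSpace 𝕜 E] {s : Set E} {x : E} :
    x ∈ (span 𝕜 s)ᗮ ↔ ∀ u ∈ s, inner 𝕜 u x = 0 := by
  rw [← span_singleton_le_iff_mem, ← isOrtho_iff_le, isOrtho_comm, isOrtho_span]
  simp

lemma Submodule.eq_orthogonal_iff_orthogonal_le {𝕜 E : Type*} [RCLike 𝕜] [NormedAddCommGroup E]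
    [InnerProductSpace 𝕜 E] [FiniteDimensional 𝕜 E] {S T : Submodule 𝕜 E} (h : S ≤ Tᗮ) :
    S = Tᗮ ↔ Sᗮ ≤ T := by
  rw [le_antisymm_iff, and_iff_right h, orthogonal_le_iff_orthogonal_le]

lemma Matrix.forall_dotProduct_add_dotProduct_eq_zero_iff {n R : Type*} [Fintype n]
    [CommRing R] [LinearOrder R] [IsStrictOrderedRing R] {a b : n → R} :
    (∀ t ω : n → R, t ⬝ᵥ a + ω ⬝ᵥ b = 0) ↔ a = 0 ∧ b = 0 := by
  refine ⟨fun h => ⟨?_, ?_⟩, by rintro ⟨rfl, rfl⟩; simp⟩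
  · simpa using h a 0
  · simpa using h 0 b

section Rigidity

variable {V : Type*}

def euclideanEquiv (V : Type*) : (V → Fin 3 → ℝ) ≃ₗ[ℝ] EuclideanSpace ℝ (V × Fin 3) where
  toFun f := WithLp.toLp 2 fun x => f x.1 x.2
  map_add' _ _ := rfl
  map_smul' _ _ := rfl
  invFun g i k := g (i, k)
  left_inv _ := rfl
  right_inv _ := rfl

@[simp]
lemma euclideanEquiv_apply (f : V → Fin 3 → ℝ) (x : V × Fin 3) :
    euclideanEquiv V f x = f x.1 x.2 :=
  rfl

lemma inner_euclideanEquiv [Fintype V] (f g : V → Fin 3 → ℝ) :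
    inner ℝ (euclideanEquiv V f) (euclideanEquiv V g) = ∑ i, f i ⬝ᵥ g i := by
  simp [PiLp.inner_apply, dotProduct, Fintype.sum_prod_type, mul_comm]

lemma mem_map_euclideanEquiv {K : Submodule ℝ (V → Fin 3 → ℝ)} {v : V → Fin 3 → ℝ} :
    euclideanEquiv V v ∈ K.map (euclideanEquiv V).toLinearMap ↔ v ∈ K := by
  simp [Submodule.mem_map_equiv]

lemma barLoad_eq_single_add_single [DecidableEq V] (p : V → Fin 3 → ℝ) (i j : V) :
    barLoad p s(i, j) = Pi.single i (p i - p j) + Pi.single j (p j - p i) := by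
  funext k
  by_cases hi : k = i <;> by_cases hj : k = j <;> simp_all [barLoad]

lemma sum_single_dotProduct [Fintype V] [DecidableEq V] (i : V) (a : Fin 3 → ℝ)
    (v : V → Fin 3 → ℝ) : ∑ k, (Pi.single i a : V → Fin 3 → ℝ) k ⬝ᵥ v k = a ⬝ᵥ v i := by
  rw [Fintype.sum_eq_single i fun k hk => by simp [hk], Pi.single_eq_same]

lemma sum_barLoad_dotProduct [Fintype V] [DecidableEq V] (p v : V → Fin 3 → ℝ) (i j : V) :
    ∑ k, barLoad p s(i, j) k ⬝ᵥ v k = (p i - p j) ⬝ᵥ (v i - v j) := by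
  simp only [barLoad_eq_single_add_single, Pi.add_apply, add_dotProduct, Finset.sum_add_distrib,
    sum_single_dotProduct]
  rw [← neg_sub (p i), neg_dotProduct, ← dotProduct_neg, ← dotProduct_add, ← sub_eq_add_neg]

lemma sum_trivialMotion_dotProduct [Fintype V] (p f : V → Fin 3 → ℝ) (t ω : Fin 3 → ℝ) :
    ∑ i, (t + ω ⨯₃ p i) ⬝ᵥ f i = t ⬝ᵥ ∑ i, f i + ω ⬝ᵥ ∑ i, p i ⨯₃ f i := by
  simp only [add_dotProduct, Finset.sum_add_distrib, dotProduct_sum]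
  congr 2 with i
  rw [dotProduct_comm, triple_product_permutation]

lemma trivialMotions_le_motionSpace (G : SimpleGraph V) (p : V → Fin 3 → ℝ) :
    trivialMotions V p ≤ motionSpace G p := by
  rintro _ ⟨t, ω, rfl⟩ i j _
  rw [add_sub_add_left_eq_sub, ← map_sub, dot_cross_self]

lemma map_motionSpace [Fintype V] [DecidableEq V] (G : SimpleGraph V) (p : V → Fin 3 → ℝ) :
    (motionSpace G p).map (euclideanEquiv V).toLinearMap =
      ((Submodule.span ℝ (barLoad p '' G.edgeSet)).map (euclideanEquiv V).toLinearMap)ᗮ := by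
  ext x
  obtain ⟨v, rfl⟩ := (euclideanEquiv V).surjective x
  rw [mem_map_euclideanEquiv, Submodule.map_span, Submodule.mem_orthogonal_span_iff]
  simp only [Set.forall_mem_image, Sym2.forall, SimpleGraph.mem_edgeSet, LinearEquiv.coe_coe,
    inner_euclideanEquiv, sum_barLoad_dotProduct]
  rfl

lemma map_eqLoads [Fintype V] (p : V → Fin 3 → ℝ) :
    (eqLoads V p).map (euclideanEquiv V).toLinearMap =
      ((trivialMotions V p).map (euclideanEquiv V).toLinearMap)ᗮ := by
  ext x
  obtain ⟨f, rfl⟩ := (euclideanEquiv V).surjective x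
  rw [mem_map_euclideanEquiv, Submodule.mem_orthogonal]
  simp only [Submodule.mem_map, forall_exists_index, and_imp, forall_apply_eq_imp_iff₂]
  change _ ↔ ∀ u, (∃ t ω : Fin 3 → ℝ, u = fun i => t + ω ⨯₃ p i) → _
  simp only [forall_exists_index, LinearEquiv.coe_coe, inner_euclideanEquiv,
    forall_comm (α := V → Fin 3 → ℝ), forall_eq, sum_trivialMotion_dotProduct,
    forall_dotProduct_add_dotProduct_eq_zero_iff]
  rfl

end Rigidity

theorem staticRigid_iff_firstOrderRigid_general {V : Type*} [Fintype V] [DecidableEq V]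
    (G : SimpleGraph V) (p : V → Fin 3 → ℝ) :
    Submodule.span ℝ (barLoad p '' G.edgeSet) = eqLoads V p ↔
      motionSpace G p ≤ trivialMotions V p := by
  have he : Function.Injective (euclideanEquiv V) := (euclideanEquiv V).injective
  rw [← (Submodule.map_injective_of_injective he).eq_iff,
    ← Submodule.map_le_map_iff_of_injective he, map_eqLoads, map_motionSpace]
  apply Submodule.eq_orthogonal_iff_orthogonal_le
  rw [Submodule.le_orthogonal_iff_le_orthogonal, ← map_motionSpace G]
  exact Submodule.map_mono (trivialMotions_le_motionSpace G p)

/-- Equivalence of static and first-order rigidity: for a framework `(G, p)` with `p` not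
collinear, the bar loads span the space of equilibrium loads iff every infinitesimal
motion is a trivial motion. -/
theorem staticRigid_iff_firstOrderRigid {V : Type*} [Fintype V] [DecidableEq V]
    (G : SimpleGraph V) [DecidableRel G.Adj] (p : V → Fin 3 → ℝ)
    (hframe : ∀ i j : V, G.Adj i j → p i ≠ p j)
    (hp : ∃ i j k : V, AffineIndependent ℝ ![p i, p j, p k]) :
    Submodule.span ℝ (barLoad p '' G.edgeSet) = eqLoads V p ↔
      motionSpace G p ≤ trivialMotions V p :=
  staticRigid_iff_firstOrderRigid_general G p
end
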